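/- The function X₀ satisfies the third-order linear differential equation x² X₀'''(x) + (x² + 9/4) X₀'(x) − x (X₀''(x) + X₀(x)) = 0 for every x ∈ ℝ; in particular, for x ≠ 0, x X₀'''(x) − X₀''(x) + (x + 9/(4x)) X₀'(x) − X₀(x) = 0. -/

import Mathlib

open Real Set

noncomputable def cc (a : ℕ → ℝ) : ℕ → ℝ := fun n =>
  if n = 0 then (5/2 : ℝ) else if Even n then a (n / 2) else 0

lemma cc_zero (a : ℕ → ℝ) : cc a 0 = 5 / 2 := by simp [cc]

lemma cc_odd (a : ℕ → ℝ) {n : ℕ} (h : ¬ Even n) : cc a n = 0 := by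
  have h0 : n ≠ 0 := by rintro rfl; exact h Even.zero
  simp [cc, h0, h]

lemma cc_two_mul (a : ℕ → ℝ) {k : ℕ} (hk : 1 ≤ k) : cc a (2 * k) = a k := by
  have h0 : 2 * k ≠ 0 := by omega
  have h2 : (2 * k) / 2 = k := by omega
  simp [cc, h0, h2, even_two_mul]

lemma a_abs (a : ℕ → ℝ) (ha1 : a 1 = 1)
    (harec : ∀ k : ℕ, 1 ≤ k →
      2 * ((k : ℝ) + 1) * (4 * (k : ℝ) ^ 2 + 5 / 4) * a (k + 1) + (2 * (k : ℝ) - 1) * a k = 0) :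
    ∀ k : ℕ, 1 ≤ k → |a k| ≤ 1 / (Nat.factorial k : ℝ) := by
  intro k hk
  induction k, hk using Nat.le_induction with
  | base => simp [ha1]
  | succ k hk ih =>
    have hrec := harec k hk
    have hk1 : (1 : ℝ) ≤ (k : ℝ) := by exact_mod_cast hk
    have heq : 2 * ((k : ℝ) + 1) * (4 * (k : ℝ) ^ 2 + 5 / 4) * |a (k + 1)|
        = (2 * (k : ℝ) - 1) * |a k| := by
      have h1 : 2 * ((k : ℝ) + 1) * (4 * (k : ℝ) ^ 2 + 5 / 4) * a (k + 1)
          = -((2 * (k : ℝ) - 1) * a k) := by linarith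
      have ht : (0:ℝ) < 2 * ((k : ℝ) + 1) * (4 * (k : ℝ) ^ 2 + 5 / 4) := by positivity
      have hs : (0:ℝ) ≤ 2 * (k : ℝ) - 1 := by linarith
      calc 2 * ((k : ℝ) + 1) * (4 * (k : ℝ) ^ 2 + 5 / 4) * |a (k + 1)|
          = |2 * ((k : ℝ) + 1) * (4 * (k : ℝ) ^ 2 + 5 / 4) * a (k + 1)| := by
            rw [abs_mul, abs_of_pos ht]
        _ = |(2 * (k : ℝ) - 1) * a k| := by rw [h1, abs_neg]
        _ = (2 * (k : ℝ) - 1) * |a k| := by rw [abs_mul, abs_of_nonneg hs]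
    have hC : (0:ℝ) < 2 * (4 * (k : ℝ) ^ 2 + 5 / 4) := by positivity
    have hb : (2 * (k : ℝ) - 1) * |a k| ≤ (2 * (4 * (k : ℝ) ^ 2 + 5 / 4)) * |a k| := by
      nlinarith [abs_nonneg (a k), sq_nonneg ((k:ℝ) - 1)]
    have hstep : ((k : ℝ) + 1) * |a (k + 1)| ≤ |a k| := by
      have h2 : ((k : ℝ) + 1) * |a (k + 1)| * (2 * (4 * (k : ℝ) ^ 2 + 5 / 4))
          ≤ |a k| * (2 * (4 * (k : ℝ) ^ 2 + 5 / 4)) := by nlinarith [heq, hb]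
      exact le_of_mul_le_mul_right h2 hC
    have hfac : (Nat.factorial (k+1) : ℝ) = ((k : ℝ) + 1) * (Nat.factorial k : ℝ) := by
      rw [Nat.factorial_succ]; push_cast; ring
    have hfp : (0:ℝ) < (Nat.factorial k : ℝ) := by exact_mod_cast (Nat.factorial_pos k)
    have ih' : |a k| * (Nat.factorial k : ℝ) ≤ 1 := (le_div_iff₀ hfp).mp ih
    rw [hfac, le_div_iff₀ (by positivity)]
    nlinarith [mul_le_mul_of_nonneg_right hstep hfp.le, ih']

lemma cc_abs (a : ℕ → ℝ) (ha1 : a 1 = 1)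
    (harec : ∀ k : ℕ, 1 ≤ k →
      2 * ((k : ℝ) + 1) * (4 * (k : ℝ) ^ 2 + 5 / 4) * a (k + 1) + (2 * (k : ℝ) - 1) * a k = 0) :
    ∀ k : ℕ, |cc a (2 * k)| ≤ 5 / 2 / (Nat.factorial k : ℝ) := by
  intro k
  rcases Nat.eq_zero_or_pos k with rfl | hk
  · rw [cc_zero, abs_of_pos (by norm_num : (0:ℝ) < 5/2)]
    norm_num
  · rw [cc_two_mul a hk]
    have h1 := a_abs a ha1 harec k hk
    have hfp : (0:ℝ) < (Nat.factorial k : ℝ) := by exact_mod_cast (Nat.factorial_pos k)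
    calc |a k| ≤ 1 / (Nat.factorial k : ℝ) := h1
      _ ≤ 5 / 2 / (Nat.factorial k : ℝ) := by gcongr; norm_num

lemma master (a : ℕ → ℝ) (ha1 : a 1 = 1)
    (harec : ∀ k : ℕ, 1 ≤ k →
      2 * ((k : ℝ) + 1) * (4 * (k : ℝ) ^ 2 + 5 / 4) * a (k + 1) + (2 * (k : ℝ) - 1) * a k = 0)
    (R : ℝ) (hR : 0 ≤ R) :
    Summable (fun n : ℕ => |cc a n| * ((n : ℝ) + 2) ^ 3 * R ^ (n + 2)) := by
  have hinj : Function.Injective (fun k : ℕ => 2 * k) := fun p q h => by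
    simpa using h
  have hvan : ∀ n ∉ Set.range (fun k : ℕ => 2 * k),
      |cc a n| * ((n : ℝ) + 2) ^ 3 * R ^ (n + 2) = 0 := by
    intro n hn
    have hodd : ¬ Even n := by
      rintro ⟨r, hr⟩
      exact hn ⟨r, show 2 * r = n by omega⟩
    simp [cc_odd a hodd]
  rw [← Function.Injective.summable_iff hinj hvan]
  have hsum : Summable (fun k : ℕ => 160 * R ^ 2 * ((8 * R ^ 2) ^ k / (Nat.factorial k : ℝ))) :=
    (Real.summable_pow_div_factorial (8 * R ^ 2)).mul_left _
  refine Summable.of_nonneg_of_le (fun k => ?_) (fun k => ?_) hsum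
  · show (0:ℝ) ≤ |cc a (2 * k)| * (((2*k : ℕ) : ℝ) + 2) ^ 3 * R ^ (2*k + 2)
    positivity
  · show |cc a (2 * k)| * (((2*k : ℕ) : ℝ) + 2) ^ 3 * R ^ (2*k + 2)
      ≤ 160 * R ^ 2 * ((8 * R ^ 2) ^ k / (Nat.factorial k : ℝ))
    have hca := cc_abs a ha1 harec k
    have hfp : (0:ℝ) < (Nat.factorial k : ℝ) := by exact_mod_cast (Nat.factorial_pos k)
    have hk2 : ((k:ℝ) + 1) ≤ 2 ^ (k+1) := by
      exact_mod_cast (Nat.lt_two_pow_self (n := k+1)).le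
    have hpow : (((2*k : ℕ) : ℝ) + 2) ^ 3 ≤ 64 * 8 ^ k := by
      calc (((2*k : ℕ) : ℝ) + 2) ^ 3 = 8 * ((k:ℝ) + 1) ^ 3 := by push_cast; ring
        _ ≤ 8 * ((2:ℝ) ^ (k+1)) ^ 3 := by gcongr
        _ = 64 * 8 ^ k := by
            rw [← pow_mul, mul_comm (k+1) 3, pow_mul, pow_succ]
            ring
    have hRp : R ^ (2*k + 2) = R ^ 2 * (R ^ 2) ^ k := by
      rw [← pow_mul, ← pow_add]; congr 1; omega
    calc |cc a (2 * k)| * (((2*k : ℕ) : ℝ) + 2) ^ 3 * R ^ (2*k + 2)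
        ≤ (5 / 2 / (Nat.factorial k : ℝ)) * (64 * 8 ^ k) * R ^ (2*k + 2) := by
          gcongr
      _ = 160 * R ^ 2 * ((8 * R ^ 2) ^ k / (Nat.factorial k : ℝ)) := by
          rw [hRp, mul_pow]; field_simp; ring

lemma keybound (c p y R : ℝ) (n m : ℕ) (hR : 1 ≤ R) (hy : |y| ≤ R) (hm : m ≤ n + 2)
    (hp : |p| ≤ ((n:ℝ) + 2) ^ 3) : |c * (p * y ^ m)| ≤ |c| * ((n:ℝ) + 2) ^ 3 * R ^ (n + 2) := by
  have hR0 : (0:ℝ) ≤ R := by linarith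
  have h1 : |y| ^ m ≤ R ^ (n + 2) :=
    le_trans (pow_le_pow_left₀ (abs_nonneg y) hy m) (pow_le_pow_right₀ hR hm)
  calc |c * (p * y ^ m)| = |c| * (|p| * |y| ^ m) := by rw [abs_mul, abs_mul, abs_pow]
    _ ≤ |c| * (((n:ℝ) + 2) ^ 3 * R ^ (n + 2)) := by
        have := abs_nonneg c
        exact mul_le_mul_of_nonneg_left
          (mul_le_mul hp h1 (pow_nonneg (abs_nonneg y) m) (by positivity)) this
    _ = |c| * ((n:ℝ) + 2) ^ 3 * R ^ (n + 2) := by ring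

lemma pb1 (n : ℕ) : |(n:ℝ)| ≤ ((n:ℝ) + 2) ^ 3 := by
  have h0 : (0:ℝ) ≤ (n:ℝ) := n.cast_nonneg
  rw [abs_of_nonneg h0]
  nlinarith [pow_nonneg h0 3, sq_nonneg ((n:ℝ)), h0]

lemma pb2 (n : ℕ) : |(n:ℝ) * ((n-1 : ℕ):ℝ)| ≤ ((n:ℝ) + 2) ^ 3 := by
  have h0 : (0:ℝ) ≤ (n:ℝ) := n.cast_nonneg
  have h1 : ((n-1 : ℕ):ℝ) ≤ (n:ℝ) := Nat.cast_le.mpr (Nat.sub_le n 1)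
  have h2 : (0:ℝ) ≤ ((n-1 : ℕ):ℝ) := Nat.cast_nonneg _
  rw [abs_of_nonneg (by positivity)]
  nlinarith [mul_le_mul_of_nonneg_left h1 h0, pow_nonneg h0 3, sq_nonneg ((n:ℝ)), h0]

lemma pb3 (n : ℕ) : |(n:ℝ) * ((n-1 : ℕ):ℝ) * ((n-2 : ℕ):ℝ)| ≤ ((n:ℝ) + 2) ^ 3 := by
  have h0 : (0:ℝ) ≤ (n:ℝ) := n.cast_nonneg
  have h1 : ((n-1 : ℕ):ℝ) ≤ (n:ℝ) := Nat.cast_le.mpr (Nat.sub_le n 1)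
  have h2 : (0:ℝ) ≤ ((n-1 : ℕ):ℝ) := Nat.cast_nonneg _
  have h3 : ((n-2 : ℕ):ℝ) ≤ (n:ℝ) := Nat.cast_le.mpr (Nat.sub_le n 2)
  have h4 : (0:ℝ) ≤ ((n-2 : ℕ):ℝ) := Nat.cast_nonneg _
  have h5 : (n:ℝ) * ((n-1 : ℕ):ℝ) * ((n-2 : ℕ):ℝ) ≤ (n:ℝ) * (n:ℝ) * (n:ℝ) :=
    mul_le_mul (mul_le_mul_of_nonneg_left h1 h0) h3 h4 (by positivity)
  rw [abs_of_nonneg (by positivity)]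
  nlinarith [h5, pow_nonneg h0 3, sq_nonneg ((n:ℝ)), h0]

lemma pbH (n : ℕ) : |(n:ℝ) - 1| ≤ ((n:ℝ) + 2) ^ 3 := by
  have h0 : (0:ℝ) ≤ (n:ℝ) := n.cast_nonneg
  rw [abs_le]
  constructor <;> nlinarith [pow_nonneg h0 3, sq_nonneg ((n:ℝ)), h0]

lemma pb0 (n : ℕ) : |(1:ℝ)| ≤ ((n:ℝ) + 2) ^ 3 := by
  have h0 : (0:ℝ) ≤ (n:ℝ) := n.cast_nonneg
  rw [abs_one]
  nlinarith [pow_nonneg h0 3, sq_nonneg ((n:ℝ)), h0]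

noncomputable def F0 (a : ℕ → ℝ) (n : ℕ) (y : ℝ) : ℝ := cc a n * y ^ n
noncomputable def F1 (a : ℕ → ℝ) (n : ℕ) (y : ℝ) : ℝ := cc a n * ((n:ℝ) * y ^ (n - 1))
noncomputable def F2 (a : ℕ → ℝ) (n : ℕ) (y : ℝ) : ℝ :=
  cc a n * ((n:ℝ) * ((n - 1 : ℕ):ℝ) * y ^ (n - 2))
noncomputable def F3 (a : ℕ → ℝ) (n : ℕ) (y : ℝ) : ℝ :=
  cc a n * ((n:ℝ) * ((n - 1 : ℕ):ℝ) * ((n - 2 : ℕ):ℝ) * y ^ (n - 3))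
noncomputable def bb (a : ℕ → ℝ) (n : ℕ) : ℝ :=
  (n:ℝ) * (((n:ℝ) - 1) * ((n:ℝ) - 3) + 9/4) * cc a n

lemma F0deriv (a : ℕ → ℝ) (n : ℕ) (y : ℝ) : HasDerivAt (fun z => F0 a n z) (F1 a n y) y :=
  (hasDerivAt_pow n y).const_mul (cc a n)

lemma F1deriv (a : ℕ → ℝ) (n : ℕ) (y : ℝ) : HasDerivAt (fun z => F1 a n z) (F2 a n y) y := by
  have h := ((hasDerivAt_pow (n-1) y).const_mul ((n:ℝ))).const_mul (cc a n)
  have hv : F2 a n y = cc a n * ((n:ℝ) * (((n-1:ℕ):ℝ) * y ^ (n-1-1))) := by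
    rw [show n-1-1 = n-2 by omega]
    show cc a n * ((n:ℝ) * ((n-1:ℕ):ℝ) * y ^ (n-2)) = _
    ring
  rw [hv]; exact h

lemma F2deriv (a : ℕ → ℝ) (n : ℕ) (y : ℝ) : HasDerivAt (fun z => F2 a n z) (F3 a n y) y := by
  have h := ((hasDerivAt_pow (n-2) y).const_mul ((n:ℝ) * ((n-1:ℕ):ℝ))).const_mul (cc a n)
  have hv : F3 a n y = cc a n * ((n:ℝ) * ((n-1:ℕ):ℝ) * (((n-2:ℕ):ℝ) * y ^ (n-2-1))) := by
    rw [show n-2-1 = n-3 by omega]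
    show cc a n * ((n:ℝ) * ((n-1:ℕ):ℝ) * ((n-2:ℕ):ℝ) * y ^ (n-3)) = _
    ring
  rw [hv]; exact h

lemma sumF0 (a : ℕ → ℝ) (X0 : ℝ → ℝ)
    (hX0 : ∀ x : ℝ, HasSum (fun k : ℕ => a (k + 1) * x ^ (2 * (k + 1))) (X0 x - 5 / 2))
    (y : ℝ) : HasSum (fun n => F0 a n y) (X0 y) := by
  have h1 : HasSum (fun k : ℕ => F0 a (2 * (k + 1)) y) (X0 y - 5 / 2) := by
    refine HasSum.congr_fun (hX0 y) (fun k => ?_)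
    show F0 a (2 * (k+1)) y = _
    rw [F0, cc_two_mul a (Nat.succ_le_succ (Nat.zero_le k))]
  have h2 : HasSum (fun k : ℕ => F0 a (2 * k) y)
      ((X0 y - 5/2) + ∑ i ∈ Finset.range 1, F0 a (2*i) y) := by
    refine (hasSum_nat_add_iff 1).mp ?_
    exact h1.congr_fun fun k => rfl
  have h3 : (X0 y - 5/2) + ∑ i ∈ Finset.range 1, F0 a (2*i) y = X0 y := by
    simp [F0, cc_zero]
  rw [h3] at h2
  have hinj : Function.Injective (fun k : ℕ => 2 * k) := fun p q h => by simpa using h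
  have hvan : ∀ n ∉ Set.range (fun k : ℕ => 2 * k), F0 a n y = 0 := by
    intro n hn
    have hodd : ¬ Even n := by
      rintro ⟨r, hr⟩
      exact hn ⟨r, show 2 * r = n by omega⟩
    simp [F0, cc_odd a hodd]
  exact (Function.Injective.hasSum_iff hinj hvan).mp (h2.congr_fun fun k => rfl)

lemma D1 (a : ℕ → ℝ) (ha1 : a 1 = 1)
    (harec : ∀ k : ℕ, 1 ≤ k →
      2 * ((k : ℝ) + 1) * (4 * (k : ℝ) ^ 2 + 5 / 4) * a (k + 1) + (2 * (k : ℝ) - 1) * a k = 0)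
    (x : ℝ) : HasDerivAt (fun z => ∑' n, F0 a n z) (∑' n, F1 a n x) x := by
  set R := |x| + 2 with hRdef
  have hax := abs_nonneg x
  have hR1 : (1:ℝ) ≤ R := by rw [hRdef]; linarith
  have hu := master a ha1 harec R (by linarith)
  refine hasDerivAt_tsum_of_isPreconnected hu Metric.isOpen_ball
    (convex_ball (0:ℝ) R).isPreconnected (fun n y _ => F0deriv a n y)
    (fun n y hy => ?_) (Metric.mem_ball_self (by linarith)) ?_
    (mem_ball_zero_iff.mpr (by rw [Real.norm_eq_abs]; linarith))
  · have hyR : |y| ≤ R := le_of_lt (mem_ball_zero_iff.mp hy)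
    rw [Real.norm_eq_abs]
    exact keybound (cc a n) _ y R n (n-1) hR1 hyR (by omega) (pb1 n)
  · refine Summable.of_norm_bounded hu (fun n => ?_)
    rw [Real.norm_eq_abs]
    have h : F0 a n 0 = cc a n * ((1:ℝ) * (0:ℝ) ^ n) := by rw [F0]; ring
    rw [h]
    exact keybound (cc a n) 1 0 R n n hR1 (by rw [abs_zero]; linarith) (by omega) (pb0 n)

lemma D2 (a : ℕ → ℝ) (ha1 : a 1 = 1)
    (harec : ∀ k : ℕ, 1 ≤ k →
      2 * ((k : ℝ) + 1) * (4 * (k : ℝ) ^ 2 + 5 / 4) * a (k + 1) + (2 * (k : ℝ) - 1) * a k = 0)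
    (x : ℝ) : HasDerivAt (fun z => ∑' n, F1 a n z) (∑' n, F2 a n x) x := by
  set R := |x| + 2 with hRdef
  have hax := abs_nonneg x
  have hR1 : (1:ℝ) ≤ R := by rw [hRdef]; linarith
  have hu := master a ha1 harec R (by linarith)
  refine hasDerivAt_tsum_of_isPreconnected hu Metric.isOpen_ball
    (convex_ball (0:ℝ) R).isPreconnected (fun n y _ => F1deriv a n y)
    (fun n y hy => ?_) (Metric.mem_ball_self (by linarith)) ?_
    (mem_ball_zero_iff.mpr (by rw [Real.norm_eq_abs]; linarith))
  · have hyR : |y| ≤ R := le_of_lt (mem_ball_zero_iff.mp hy)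
    rw [Real.norm_eq_abs]
    have h : F2 a n y = cc a n * (((n:ℝ) * ((n-1:ℕ):ℝ)) * y ^ (n-2)) := by rw [F2]
    rw [h]
    exact keybound (cc a n) _ y R n (n-2) hR1 hyR (by omega) (pb2 n)
  · refine Summable.of_norm_bounded hu (fun n => ?_)
    rw [Real.norm_eq_abs]
    have h : F1 a n 0 = cc a n * ((n:ℝ) * (0:ℝ) ^ (n-1)) := by rw [F1]
    rw [h]
    exact keybound (cc a n) _ 0 R n (n-1) hR1 (by rw [abs_zero]; linarith) (by omega) (pb1 n)

lemma D3 (a : ℕ → ℝ) (ha1 : a 1 = 1)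
    (harec : ∀ k : ℕ, 1 ≤ k →
      2 * ((k : ℝ) + 1) * (4 * (k : ℝ) ^ 2 + 5 / 4) * a (k + 1) + (2 * (k : ℝ) - 1) * a k = 0)
    (x : ℝ) : HasDerivAt (fun z => ∑' n, F2 a n z) (∑' n, F3 a n x) x := by
  set R := |x| + 2 with hRdef
  have hax := abs_nonneg x
  have hR1 : (1:ℝ) ≤ R := by rw [hRdef]; linarith
  have hu := master a ha1 harec R (by linarith)
  refine hasDerivAt_tsum_of_isPreconnected hu Metric.isOpen_ball
    (convex_ball (0:ℝ) R).isPreconnected (fun n y _ => F2deriv a n y)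
    (fun n y hy => ?_) (Metric.mem_ball_self (by linarith)) ?_
    (mem_ball_zero_iff.mpr (by rw [Real.norm_eq_abs]; linarith))
  · have hyR : |y| ≤ R := le_of_lt (mem_ball_zero_iff.mp hy)
    rw [Real.norm_eq_abs]
    have h : F3 a n y = cc a n * (((n:ℝ) * ((n-1:ℕ):ℝ) * ((n-2:ℕ):ℝ)) * y ^ (n-3)) := by
      rw [F3]
    rw [h]
    exact keybound (cc a n) _ y R n (n-3) hR1 hyR (by omega) (pb3 n)
  · refine Summable.of_norm_bounded hu (fun n => ?_)
    rw [Real.norm_eq_abs]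
    have h : F2 a n 0 = cc a n * (((n:ℝ) * ((n-1:ℕ):ℝ)) * (0:ℝ) ^ (n-2)) := by rw [F2]
    rw [h]
    exact keybound (cc a n) _ 0 R n (n-2) hR1 (by rw [abs_zero]; linarith) (by omega) (pb2 n)

lemma bb_rec (a : ℕ → ℝ) (ha1 : a 1 = 1)
    (harec : ∀ k : ℕ, 1 ≤ k →
      2 * ((k : ℝ) + 1) * (4 * (k : ℝ) ^ 2 + 5 / 4) * a (k + 1) + (2 * (k : ℝ) - 1) * a k = 0)
    (n : ℕ) : bb a (n+2) = -(cc a n * ((n:ℝ) - 1)) := by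
  rcases Nat.even_or_odd n with he | ho
  · obtain ⟨k, hk⟩ := he
    subst hk
    rcases Nat.eq_zero_or_pos k with rfl | hk1
    · have h2 : cc a 2 = a 1 := by
        rw [show (2:ℕ) = 2 * 1 by norm_num, cc_two_mul a le_rfl]
      norm_num [bb, h2, ha1, cc_zero]
    · have e1 : k + k + 2 = 2 * (k+1) := by omega
      have e2 : k + k = 2 * k := by omega
      rw [bb, e1, cc_two_mul a (by omega), e2, cc_two_mul a hk1]
      have h := harec k hk1
      push_cast
      linear_combination h
  · have h1 : ¬ Even n := Nat.not_even_iff_odd.mpr ho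
    have h2 : ¬ Even (n+2) := by
      intro h
      exact h1 (by simpa [Nat.even_add] using h)
    simp [bb, cc_odd a h1, cc_odd a h2]

/-- `X₀` satisfies
`x² X₀'''(x) + (x² + 9/4) X₀'(x) − x (X₀''(x) + X₀(x)) = 0` for every real `x`;
in particular, for `x ≠ 0`,
`x X₀'''(x) − X₀''(x) + (x + 9/(4x)) X₀'(x) − X₀(x) = 0`. -/
theorem stmt1 (a : ℕ → ℝ) (ha1 : a 1 = 1)
    (harec : ∀ k : ℕ, 1 ≤ k →
      2 * ((k : ℝ) + 1) * (4 * (k : ℝ) ^ 2 + 5 / 4) * a (k + 1) + (2 * (k : ℝ) - 1) * a k = 0)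
    (X0 : ℝ → ℝ)
    (hX0 : ∀ x : ℝ, HasSum (fun k : ℕ => a (k + 1) * x ^ (2 * (k + 1))) (X0 x - 5 / 2)) :
    (∀ x : ℝ,
      x ^ 2 * iteratedDeriv 3 X0 x + (x ^ 2 + 9 / 4) * deriv X0 x
        - x * (iteratedDeriv 2 X0 x + X0 x) = 0) ∧
    (∀ x : ℝ, x ≠ 0 →
      x * iteratedDeriv 3 X0 x - iteratedDeriv 2 X0 x + (x + 9 / (4 * x)) * deriv X0 x
        - X0 x = 0) := by
  have hXeq : X0 = fun y => ∑' n, F0 a n y := funext fun y => (sumF0 a X0 hX0 y).tsum_eq.symm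
  have hD1 : ∀ x : ℝ, HasDerivAt X0 (∑' n, F1 a n x) x := fun x => by
    rw [hXeq]; exact D1 a ha1 harec x
  have hd1 : deriv X0 = fun y => ∑' n, F1 a n y := funext fun y => (hD1 y).deriv
  have hd2 : iteratedDeriv 2 X0 = fun y => ∑' n, F2 a n y := by
    rw [iteratedDeriv_succ, iteratedDeriv_one, hd1]
    exact funext fun y => (D2 a ha1 harec y).deriv
  have hd3 : ∀ x : ℝ, iteratedDeriv 3 X0 x = ∑' n, F3 a n x := by
    intro x
    rw [show (3:ℕ) = 2+1 from rfl, iteratedDeriv_succ, hd2]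
    exact (D3 a ha1 harec x).deriv
  have key1 : ∀ x : ℝ,
      x ^ 2 * iteratedDeriv 3 X0 x + (x ^ 2 + 9 / 4) * deriv X0 x
        - x * (iteratedDeriv 2 X0 x + X0 x) = 0 := by
    intro x
    set R := |x| + 2 with hRdef
    have hax := abs_nonneg x
    have hR1 : (1:ℝ) ≤ R := by rw [hRdef]; linarith
    have hxR : |x| ≤ R := by rw [hRdef]; linarith
    have hu := master a ha1 harec R (by linarith)
    have hsum1 : Summable (fun n => F1 a n x) := by
      refine Summable.of_norm_bounded hu (fun n => ?_)
      rw [Real.norm_eq_abs]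
      exact keybound (cc a n) _ x R n (n-1) hR1 hxR (by omega) (pb1 n)
    have hsum2 : Summable (fun n => F2 a n x) := by
      refine Summable.of_norm_bounded hu (fun n => ?_)
      rw [Real.norm_eq_abs]
      have h : F2 a n x = cc a n * (((n:ℝ) * ((n-1:ℕ):ℝ)) * x ^ (n-2)) := by rw [F2]
      rw [h]
      exact keybound (cc a n) _ x R n (n-2) hR1 hxR (by omega) (pb2 n)
    have hsum3 : Summable (fun n => F3 a n x) := by
      refine Summable.of_norm_bounded hu (fun n => ?_)
      rw [Real.norm_eq_abs]
      have h : F3 a n x = cc a n * (((n:ℝ) * ((n-1:ℕ):ℝ) * ((n-2:ℕ):ℝ)) * x ^ (n-3)) := by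
        rw [F3]
      rw [h]
      exact keybound (cc a n) _ x R n (n-3) hR1 hxR (by omega) (pb3 n)
    have hsumH : Summable (fun n => cc a n * (((n:ℝ) - 1) * x ^ (n+1))) := by
      refine Summable.of_norm_bounded hu (fun n => ?_)
      rw [Real.norm_eq_abs]
      exact keybound (cc a n) _ x R n (n+1) hR1 hxR (by omega) (pbH n)
    have h0s : HasSum (fun n => F0 a n x) (X0 x) := sumF0 a X0 hX0 x
    have h1s : HasSum (fun n => F1 a n x) (deriv X0 x) := by
      rw [hd1]; exact hsum1.hasSum
    have h2s : HasSum (fun n => F2 a n x) (iteratedDeriv 2 X0 x) := by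
      rw [hd2]; exact hsum2.hasSum
    have h3s : HasSum (fun n => F3 a n x) (iteratedDeriv 3 X0 x) := by
      rw [hd3 x]; exact hsum3.hasSum
    have hL : HasSum
        (fun n => x^2 * F3 a n x + (x^2 + 9/4) * F1 a n x - x * (F2 a n x + F0 a n x))
        (x ^ 2 * iteratedDeriv 3 X0 x + (x ^ 2 + 9 / 4) * deriv X0 x
          - x * (iteratedDeriv 2 X0 x + X0 x)) :=
      ((h3s.mul_left _).add (h1s.mul_left _)).sub ((h2s.add h0s).mul_left _)
    have hH : HasSum (fun n => cc a n * (((n:ℝ) - 1) * x ^ (n+1)))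
        (∑' n, cc a n * (((n:ℝ) - 1) * x ^ (n+1))) := hsumH.hasSum
    set T := ∑' n, cc a n * (((n:ℝ) - 1) * x ^ (n+1)) with hT
    have hF2' : HasSum (fun n => bb a (n+2) * x ^ (n+1)) (-T) := by
      refine (hH.neg).congr_fun fun n => ?_
      rw [bb_rec a ha1 harec n]; ring
    have hFs : HasSum (fun n : ℕ => bb a n * x ^ (n-1))
        (-T + ∑ i ∈ Finset.range 2, bb a i * x ^ (i-1)) := by
      refine (hasSum_nat_add_iff 2).mp ?_
      exact hF2'.congr_fun fun n => rfl
    have hzsum : -T + ∑ i ∈ Finset.range 2, bb a i * x ^ (i-1) = -T := by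
      have hb0 : bb a 0 = 0 := by simp [bb]
      have hb1 : bb a 1 = 0 := by
        have : cc a 1 = 0 := cc_odd a (by decide)
        simp [bb, this]
      simp [Finset.sum_range_succ, hb0, hb1]
    rw [hzsum] at hFs
    have hzero : HasSum
        (fun n => x^2 * F3 a n x + (x^2 + 9/4) * F1 a n x - x * (F2 a n x + F0 a n x)) 0 := by
      have hadd := hFs.add hH
      rw [neg_add_cancel] at hadd
      refine hadd.congr_fun fun n => ?_
      match n with
      | 0 => simp [F0, F1, F2, F3, bb]; ring
      | 1 => simp [F0, F1, F2, F3, bb]; push_cast; ring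
      | 2 => simp [F0, F1, F2, F3, bb]; push_cast; ring
      | (m+3) =>
        simp only [F0, F1, F2, F3, bb]
        rw [show m+3-1 = m+2 from rfl, show m+3-2 = m+1 from rfl, show m+3-3 = m from rfl]
        push_cast
        ring
    exact hL.unique hzero
  refine ⟨key1, fun x hx => ?_⟩
  have h := key1 x
  have h4x : (4:ℝ) * x ≠ 0 := mul_ne_zero (by norm_num) hx
  field_simp
  linear_combination 4 * h
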